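/- Let J : ℝⁿ → [0,∞) be a function whose sublevel sets {φ ∈ ℝⁿ : J(φ) ≤ c} are compact for every c ≥ 0, and suppose there exist real numbers p > 1 and C ≥ 1 such that J(tφ) ≤ C(t^p J(φ) + 1) for all t ∈ (0,1] and all φ ∈ ℝⁿ. Then for every linear map L : ℝⁿ → ℝ and every ε > 0 there exists C′ ≥ 0 such that |L(φ)| ≤ ε J(φ) + C′ for all φ ∈ ℝⁿ. -/

import Mathlib

/-!
By compactness `|L| ≤ M` on `{J ≤ 2C}`. Rescaling `φ` by `t = J(φ)^(-1/p)` brings it into that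
set, so `|L φ| ≤ M J(φ)^(1/p)` by linearity; as `1/p < 1`, this is `≤ ε J(φ) + C'`.
-/

open Filter

/-- Beyond a threshold `R` the factor `x ^ (q - 1)` is below `ε / (|a| + 1)`; below it `x ^ q`
is at most `R ^ q`. -/
theorem Real.exists_mul_rpow_le_mul_add {q : ℝ} (hq₀ : 0 ≤ q) (hq₁ : q < 1) (a : ℝ) {ε : ℝ}
    (hε : 0 < ε) : ∃ K, ∀ x : ℝ, 0 ≤ x → a * x ^ q ≤ ε * x + K := by
  obtain ⟨R, hR_small, hR_one⟩ :=
    (((tendsto_rpow_neg_atTop (sub_pos.2 hq₁)).eventually_le_const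
      (show 0 < ε / (|a| + 1) by positivity)).and (eventually_ge_atTop 1)).exists
  have hR₀ : 0 < R := one_pos.trans_le hR_one
  refine ⟨|a| * R ^ q, fun x hx => ?_⟩
  have ha : a * x ^ q ≤ |a| * x ^ q :=
    mul_le_mul_of_nonneg_right (le_abs_self a) (Real.rpow_nonneg hx q)
  rcases le_total x R with hxR | hRx
  · have : |a| * x ^ q ≤ |a| * R ^ q := by gcongr
    nlinarith
  · have hx₀ : 0 < x := hR₀.trans_le hRx
    have hsplit : x ^ q = x ^ (-(1 - q)) * x := by
      rw [← Real.rpow_add_one hx₀.ne']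
      ring_nf
    have hdecay : x ^ (-(1 - q)) ≤ ε / (|a| + 1) :=
      (Real.rpow_le_rpow_of_nonpos hR₀ hRx (by linarith)).trans hR_small
    have hcoef : |a| * (ε / (|a| + 1)) ≤ ε := by
      rw [mul_div_assoc', div_le_iff₀ (by positivity)]
      nlinarith [abs_nonneg a]
    calc a * x ^ q ≤ |a| * (x ^ (-(1 - q)) * x) := hsplit ▸ ha
      _ ≤ |a| * (ε / (|a| + 1) * x) := by gcongr
      _ ≤ ε * x := by rw [← mul_assoc]; exact mul_le_mul_of_nonneg_right hcoef hx
      _ ≤ ε * x + |a| * R ^ q := le_add_of_nonneg_right (by positivity)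

section PowerGrowth

variable {E : Type*} [AddCommGroup E] [Module ℝ E] (L : E →ₗ[ℝ] ℝ) {J : E → ℝ} {p C M : ℝ}

theorem abs_le_mul_rpow_of_power_growth (hp : 0 < p)
    (hgrowth : ∀ t : ℝ, 0 < t → t ≤ 1 → ∀ φ, J (t • φ) ≤ C * (t ^ p * J φ + 1))
    (hM : ∀ φ, J φ ≤ 2 * C → |L φ| ≤ M) {φ : E} (hφ : 1 ≤ J φ) :
    |L φ| ≤ M * J φ ^ p⁻¹ := by
  set s := J φ ^ p⁻¹
  have hs : 1 ≤ s := Real.one_le_rpow hφ (inv_nonneg.2 hp.le)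
  have hs₀ : 0 < s := one_pos.trans_le hs
  have hsp : s⁻¹ ^ p = (J φ)⁻¹ := by
    rw [Real.inv_rpow hs₀.le, Real.rpow_inv_rpow (zero_le_one.trans hφ) hp.ne']
  have hJ : J (s⁻¹ • φ) ≤ 2 * C := by
    have := hgrowth s⁻¹ (inv_pos.2 hs₀) (inv_le_one_of_one_le₀ hs) φ
    rw [hsp, inv_mul_cancel₀ (one_pos.trans_le hφ).ne'] at this
    linarith
  have := hM _ hJ
  rw [map_smul, smul_eq_mul, abs_mul, abs_of_pos (inv_pos.2 hs₀), inv_mul_le_iff₀ hs₀] at this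
  linarith

theorem abs_le_mul_rpow_add_of_power_growth (hp : 0 < p) (hC : 1 ≤ C) (hJ₀ : ∀ φ, 0 ≤ J φ)
    (hgrowth : ∀ t : ℝ, 0 < t → t ≤ 1 → ∀ φ, J (t • φ) ≤ C * (t ^ p * J φ + 1))
    (hM : ∀ φ, J φ ≤ 2 * C → |L φ| ≤ M) (φ : E) :
    |L φ| ≤ M * J φ ^ p⁻¹ + M := by
  rcases le_total (J φ) 1 with hφ | hφ
  · have hLφ := hM φ (by linarith)
    have : 0 ≤ M * J φ ^ p⁻¹ :=
      mul_nonneg ((abs_nonneg _).trans hLφ) (Real.rpow_nonneg (hJ₀ φ) _)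
    linarith
  · have hLφ := abs_le_mul_rpow_of_power_growth L hp hgrowth hM hφ
    have : 0 ≤ M := nonneg_of_mul_nonneg_left ((abs_nonneg (L φ)).trans hLφ)
      (Real.rpow_pos_of_pos (one_pos.trans_le hφ) _)
    linarith

end PowerGrowth

theorem power_growth_implies_coercivity {n : ℕ}
    (J : EuclideanSpace ℝ (Fin n) → ℝ)
    (hJ0 : ∀ φ, 0 ≤ J φ)
    (hJcomp : ∀ c : ℝ, 0 ≤ c → IsCompact {φ | J φ ≤ c})
    (p C : ℝ) (hp : 1 < p) (hC : 1 ≤ C)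
    (hgrowth : ∀ t : ℝ, 0 < t → t ≤ 1 → ∀ φ, J (t • φ) ≤ C * (t ^ p * J φ + 1)) :
    ∀ (L : EuclideanSpace ℝ (Fin n) →ₗ[ℝ] ℝ) (ε : ℝ), 0 < ε →
      ∃ C' : ℝ, 0 ≤ C' ∧ ∀ φ, |L φ| ≤ ε * J φ + C' := by
  intro L ε hε
  obtain ⟨M, hM⟩ := (hJcomp (2 * C) (by linarith)).exists_bound_of_continuousOn
    L.continuous_of_finiteDimensional.continuousOn
  obtain ⟨K, hK⟩ := Real.exists_mul_rpow_le_mul_add (inv_nonneg.2 (zero_le_one.trans hp.le))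
    (inv_lt_one_of_one_lt₀ hp) M hε
  refine ⟨max 0 (K + M), le_max_left _ _, fun φ => ?_⟩
  have hsublinear := abs_le_mul_rpow_add_of_power_growth L (one_pos.trans hp) hC hJ0 hgrowth
    (fun ψ hψ => by simpa using hM ψ hψ) φ
  linarith [hK (J φ) (hJ0 φ), le_max_right 0 (K + M)]
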